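/- arXiv:2504.01971 — 4 statements merged into one kernel-verified Lean document; each statement's English description precedes it below -/
import Mathlib

section
/- For every complex number z and real φ, exp(i z cos φ) = Σ_{m=-∞}^{∞} i^m J_m(z) e^{i m φ}, where J_m is the Bessel function of the first kind of integer order m (Jacobi–Anger expansion). -/
/-!
The exponents `z t / 2` and `-z / (2 t)` multiply to `-(z / 2)²`, so in the product of their
exponential series the terms with `t`-degree `m` add up to `J_m(z) t^m`. This gives the
generating function `exp ((z / 2) (t - t⁻¹)) = ∑ J_m(z) t^m` for `t ≠ 0`, and `t = i e^{iφ}`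
turns it into the Jacobi–Anger expansion.
-/

open Complex Real

/-- Bessel function of the first kind of natural order `n`. -/
noncomputable def besselJ (n : ℕ) (z : ℂ) : ℂ :=
  ∑' k : ℕ, ((-1 : ℂ) ^ k / ((k.factorial : ℂ) * ((k + n).factorial : ℂ))) * (z / 2) ^ (2 * k + n)

/-- Bessel function of the first kind of integer order `m`, with `J_{-n} = (-1)^n J_n`. -/
noncomputable def besselJInt (m : ℤ) (z : ℂ) : ℂ :=
  if 0 ≤ m then besselJ m.toNat z else (-1 : ℂ) ^ m.natAbs * besselJ m.natAbs z

section
open scoped Nat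

variable {𝔸 : Type*}

def expMulExpTerm [DivisionRing 𝔸] (x y : 𝔸) (p : ℕ × ℕ) : 𝔸 :=
  x ^ p.1 / p.1 ! * (y ^ p.2 / p.2 !)

theorem expMulExpTerm_swap [Field 𝔸] (x y : 𝔸) (p : ℕ × ℕ) :
    expMulExpTerm x y p.swap = expMulExpTerm y x p :=
  mul_comm _ _

theorem hasSum_expMulExpTerm [NormedDivisionRing 𝔸] [NormedAlgebra ℚ 𝔸] [CharZero 𝔸]
    [CompleteSpace 𝔸] (x y : 𝔸) :
    HasSum (expMulExpTerm x y) (NormedSpace.exp x * NormedSpace.exp y) := by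
  have hx := NormedSpace.norm_expSeries_div_summable x
  have hy := NormedSpace.norm_expSeries_div_summable y
  refine (summable_mul_of_summable_norm hx hy).hasSum_iff.2 ?_
  rw [NormedSpace.exp_eq_tsum_div]
  exact (tsum_mul_tsum_of_summable_norm hx hy).symm

def Int.prodNatEquiv : ℤ × ℕ ≃ ℕ × ℕ where
  toFun p := (p.2 + p.1.toNat, p.2 + (-p.1).toNat)
  invFun q := ((q.1 : ℤ) - q.2, min q.1 q.2)
  left_inv := fun ⟨m, l⟩ => by simp only [Prod.mk.injEq]; omega
  right_inv := fun ⟨j, k⟩ => by simp only [Prod.mk.injEq]; omega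

theorem Int.prodNatEquiv_natCast (n l : ℕ) : Int.prodNatEquiv (n, l) = (l + n, l) := by
  simp [Int.prodNatEquiv]

theorem Int.prodNatEquiv_neg_natCast (n l : ℕ) : Int.prodNatEquiv (-n, l) = (l, l + n) := by
  simp [Int.prodNatEquiv]

theorem besselJInt_natCast (n : ℕ) (z : ℂ) : besselJInt n z = besselJ n z := by
  simp [besselJInt]

theorem besselJInt_neg_natCast (n : ℕ) (z : ℂ) : besselJInt (-n) z = (-1) ^ n * besselJ n z := by
  rcases n.eq_zero_or_pos with rfl | hn
  · simp [besselJInt]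
  · simp [besselJInt, hn.ne']

theorem besselJ_mul_pow (n : ℕ) (z : ℂ) {t : ℂ} (ht : t ≠ 0) :
    besselJ n z * t ^ n = ∑' l : ℕ, expMulExpTerm (z / 2 * t) (-(z / 2) / t) (l + n, l) := by
  have hterm (l : ℕ) : (z / 2 * t) ^ (l + n) * (-(z / 2) / t) ^ l =
      (-1) ^ l * (z / 2) ^ (2 * l + n) * t ^ n := by
    rw [neg_div, neg_pow, div_pow, mul_pow, pow_add, pow_add]
    field_simp
    ring
  rw [besselJ, ← tsum_mul_right]
  refine tsum_congr fun l => ?_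
  rw [expMulExpTerm, div_mul_div_comm, hterm]
  ring

theorem besselJInt_mul_zpow (m : ℤ) (z : ℂ) {t : ℂ} (ht : t ≠ 0) :
    besselJInt m z * t ^ m =
      ∑' l : ℕ, expMulExpTerm (z / 2 * t) (-(z / 2) / t) (Int.prodNatEquiv (m, l)) := by
  obtain ⟨n, rfl | rfl⟩ := Int.eq_nat_or_neg m
  · simp only [Int.prodNatEquiv_natCast, besselJInt_natCast, zpow_natCast]
    exact besselJ_mul_pow n z ht
  · -- `t ↦ -t⁻¹` exchanges the two exponents `z t / 2` and `-z / (2 t)`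
    have hswap := besselJ_mul_pow n z (neg_ne_zero.2 (inv_ne_zero ht))
    rw [show z / 2 * -t⁻¹ = -(z / 2) / t by ring,
      show -(z / 2) / -t⁻¹ = z / 2 * t by field_simp] at hswap
    simp only [Int.prodNatEquiv_neg_natCast, besselJInt_neg_natCast, zpow_neg, zpow_natCast]
    calc (-1) ^ n * besselJ n z * (t ^ n)⁻¹ = besselJ n z * (-t⁻¹) ^ n := by
          rw [neg_pow t⁻¹, inv_pow]; ring
      _ = _ := hswap
      _ = ∑' l : ℕ, expMulExpTerm (z / 2 * t) (-(z / 2) / t) (l, l + n) :=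
          tsum_congr fun l => (expMulExpTerm_swap _ _ (l + n, l)).symm

theorem hasSum_besselJInt_mul_zpow (z : ℂ) {t : ℂ} (ht : t ≠ 0) :
    HasSum (fun m : ℤ => besselJInt m z * t ^ m) (Complex.exp (z / 2 * (t - t⁻¹))) := by
  have h := hasSum_expMulExpTerm (z / 2 * t) (-(z / 2) / t)
  rw [← Complex.exp_eq_exp_ℂ, ← Complex.exp_add, ← Int.prodNatEquiv.hasSum_iff] at h
  rw [show z / 2 * (t - t⁻¹) = z / 2 * t + -(z / 2) / t by ring]
  refine h.prod_fiberwise fun m => ?_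
  rw [besselJInt_mul_zpow m z ht]
  exact (h.summable.prod_factor m).hasSum

end

/-- Jacobi–Anger expansion: `exp(i z cos φ) = Σ_{m∈ℤ} i^m J_m(z) e^{imφ}`. -/
theorem jacobi_anger (z : ℂ) (φ : ℝ) :
    Complex.exp (Complex.I * z * Real.cos φ) =
      ∑' m : ℤ, Complex.I ^ m * besselJInt m z * Complex.exp (Complex.I * m * φ) := by
  set t := Complex.I * Complex.exp (Complex.I * φ) with ht_def
  have ht : t ≠ 0 := mul_ne_zero Complex.I_ne_zero (Complex.exp_ne_zero _)
  have hexp : z / 2 * (t - t⁻¹) = Complex.I * z * Real.cos φ := by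
    rw [ht_def, Complex.ofReal_cos, Complex.cos, mul_inv, Complex.inv_I, ← Complex.exp_neg]
    ring_nf
  have hpow (m : ℤ) : Complex.I ^ m * Complex.exp (Complex.I * m * φ) = t ^ m := by
    rw [mul_zpow, ← Complex.exp_int_mul]
    ring_nf
  rw [← hexp, ← (hasSum_besselJInt_mul_zpow z ht).tsum_eq]
  refine tsum_congr fun m => ?_
  rw [← hpow]
  ring
end

section
/- For every integer m, real numbers r ≥ 0, k > 0 and α, one has ∫_0^{2π} e^{i k r cos α cos φ - i m φ} cos(k |sin α| r sin φ) dφ = 2π i^{|m|} J_{|m|}(k r) cos(m α). -/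
/-!
Write `z = k r`. Since `cos` is even, `|sin α|` may be replaced by `sin α`, and expanding
`cos w = (e^{iw} + e^{-iw}) / 2` together with `cos α cos φ ± sin α sin φ = cos (φ ∓ α)` turns the
integrand into the mean of `e^{iz cos (φ ∓ α)} e^{-imφ}`. By `2π`-periodicity each shift by `∓α`
only contributes a phase `e^{∓imα}`, and the two phases add up to `2 cos (mα)`. What remains is
Bessel's integral `∫₀^{2π} e^{iz cos φ - imφ} dφ = 2π i^{|m|} J_{|m|}(z)`: expand `e^{iz cos φ}`
in its power series and integrate termwise. The `n`-th term involves
`∫₀^{2π} cos^n φ e^{-imφ} dφ = 2π 2^{-n} binom(n, (n + m)/2)`, which vanishes unless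
`n = 2j + |m|`, and these surviving terms are exactly the series of `J_{|m|}`.
-/

open Complex Real

open intervalIntegral Finset

lemma integral_exp_I_mul_int (c : ℤ) :
    ∫ φ in (0 : ℝ)..2 * π, cexp (I * c * φ) = if c = 0 then (2 * π : ℂ) else 0 := by
  split_ifs with hc
  · simp [hc]
  have hc' : I * c ≠ 0 := mul_ne_zero I_ne_zero (Int.cast_ne_zero.2 hc)
  have hperiod : cexp (I * c * (2 * π)) = 1 := by
    rw [← exp_int_mul_two_pi_mul_I c]; ring_nf
  simp [integral_exp_mul_complex hc', hperiod]

lemma cos_pow_eq_sum_exp (n : ℕ) (φ : ℝ) :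
    (Real.cos φ : ℂ) ^ n =
      ∑ j ∈ range (n + 1), (n.choose j : ℂ) / 2 ^ n * cexp (I * (2 * j - n : ℤ) * φ) := by
  rw [ofReal_cos, Complex.cos, div_pow, add_pow, sum_div]
  refine sum_congr rfl fun j hj => ?_
  have hjn : j ≤ n := mem_range_succ_iff.1 hj
  rw [← Complex.exp_nat_mul, ← Complex.exp_nat_mul, ← Complex.exp_add]
  push_cast [hjn]
  ring_nf

lemma integral_cos_pow_mul_exp (n : ℕ) (m : ℤ) :
    ∫ φ in (0 : ℝ)..2 * π, (Real.cos φ : ℂ) ^ n * cexp (-(I * m * φ)) =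
      2 * π / 2 ^ n * ∑ j ∈ range (n + 1), if 2 * (j : ℤ) = n + m then (n.choose j : ℂ) else 0 := by
  have hexpand (φ : ℝ) : (Real.cos φ : ℂ) ^ n * cexp (-(I * m * φ)) =
      ∑ j ∈ range (n + 1), (n.choose j : ℂ) / 2 ^ n * cexp (I * (2 * j - n - m : ℤ) * φ) := by
    rw [cos_pow_eq_sum_exp, sum_mul]
    refine sum_congr rfl fun j _ => ?_
    rw [mul_assoc, ← Complex.exp_add]
    push_cast; ring_nf
  simp_rw [hexpand]
  rw [integral_finsetSum fun j _ => Continuous.intervalIntegrable (by fun_prop) _ _, mul_sum]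
  refine sum_congr rfl fun j _ => ?_
  rw [intervalIntegral.integral_const_mul, integral_exp_I_mul_int]
  simp only [sub_eq_zero, sub_sub]
  split_ifs <;> ring

lemma sum_choose_ite_eq_zero {n : ℕ} {m : ℤ} (h : ∀ k : ℕ, n ≠ 2 * k + m.natAbs) :
    (∑ j ∈ range (n + 1), if 2 * (j : ℤ) = n + m then (n.choose j : ℂ) else 0) = 0 :=
  sum_eq_zero fun j hj => if_neg fun hj' =>
    h ((n - m.natAbs) / 2) (by rw [mem_range] at hj; omega)

lemma sum_choose_ite_two_mul_add (k : ℕ) (m : ℤ) :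
    (∑ j ∈ range (2 * k + m.natAbs + 1),
        if 2 * (j : ℤ) = ((2 * k + m.natAbs : ℕ) : ℤ) + m then
          ((2 * k + m.natAbs).choose j : ℂ) else 0) =
      (2 * k + m.natAbs).factorial / (k.factorial * (k + m.natAbs).factorial) := by
  obtain ⟨a, rfl | rfl⟩ := Int.eq_nat_or_neg m
  · rw [sum_eq_single_of_mem (k + a) (by simp; omega) fun j _ hj => if_neg (by omega),
      if_pos (by omega), show 2 * k + (a : ℤ).natAbs = (k + a) + k by omega, Nat.cast_add_choose]
    simp [mul_comm]
  · rw [sum_eq_single_of_mem k (by simp; omega) fun j _ hj => if_neg (by omega),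
      if_pos (by omega), show 2 * k + (-(a : ℤ)).natAbs = k + (k + a) by omega, Nat.cast_add_choose]
    simp

lemma tsum_mul_integral_cos_pow_mul_exp_eq_besselJ (m : ℤ) (z : ℂ) :
    ∑' n : ℕ, (I * z) ^ n / n.factorial *
        ∫ φ in (0 : ℝ)..2 * π, (Real.cos φ : ℂ) ^ n * cexp (-(I * m * φ)) =
      2 * π * I ^ m.natAbs * besselJ m.natAbs z := by
  have hinj : Function.Injective fun k : ℕ => 2 * k + m.natAbs := fun k l h => by
    simp only at h; omega
  have hsupp : Function.support (fun n : ℕ => (I * z) ^ n / n.factorial *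
      ∫ φ in (0 : ℝ)..2 * π, (Real.cos φ : ℂ) ^ n * cexp (-(I * m * φ))) ⊆
      Set.range fun k : ℕ => 2 * k + m.natAbs := by
    intro n hn
    by_contra hn'
    refine hn ?_
    dsimp only
    rw [integral_cos_pow_mul_exp, sum_choose_ite_eq_zero fun k hk => hn' ⟨k, hk.symm⟩]
    simp
  rw [← hinj.tsum_eq hsupp, besselJ, ← tsum_mul_left]
  refine tsum_congr fun k => ?_
  rw [integral_cos_pow_mul_exp, sum_choose_ite_two_mul_add, mul_pow, div_pow, pow_add I, pow_mul,
    I_sq]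
  have hfac : ((2 * k + m.natAbs).factorial : ℂ) ≠ 0 :=
    Nat.cast_ne_zero.2 (Nat.factorial_ne_zero _)
  field_simp

lemma hasSum_mul_integral_cos_pow_mul_exp (m : ℤ) (z : ℂ) :
    HasSum (fun n : ℕ => (I * z) ^ n / n.factorial *
        ∫ φ in (0 : ℝ)..2 * π, (Real.cos φ : ℂ) ^ n * cexp (-(I * m * φ)))
      (∫ φ in (0 : ℝ)..2 * π, cexp (I * z * Real.cos φ) * cexp (-(I * m * φ))) := by
  have hterm (n : ℕ) : (I * z) ^ n / n.factorial *
      ∫ φ in (0 : ℝ)..2 * π, (Real.cos φ : ℂ) ^ n * cexp (-(I * m * φ)) =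
      ∫ φ in (0 : ℝ)..2 * π, (I * z * Real.cos φ) ^ n / n.factorial * cexp (-(I * m * φ)) := by
    rw [← intervalIntegral.integral_const_mul]
    simp only [mul_pow]
    ring_nf
  simp only [hterm]
  refine hasSum_integral_of_dominated_convergence (fun n _ => ‖z‖ ^ n / n.factorial)
    (fun n => (Continuous.aestronglyMeasurable (by fun_prop))) (fun n => ?_)
    (.of_forall fun _ _ => Real.summable_pow_div_factorial ‖z‖) intervalIntegrable_const
    (.of_forall fun φ _ => ?_)
  · refine .of_forall fun φ _ => ?_
    have hunit : ‖cexp (-(I * m * φ))‖ = 1 := by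
      simp [Complex.norm_exp]
    have hcos : ‖I * z * Real.cos φ‖ ≤ ‖z‖ := by
      rw [norm_mul, norm_mul, norm_I, one_mul, norm_real, Real.norm_eq_abs]
      exact mul_le_of_le_one_right (norm_nonneg z) (Real.abs_cos_le_one φ)
    rw [norm_mul, hunit, mul_one, norm_div, norm_pow, Complex.norm_natCast]
    gcongr
  · have := (NormedSpace.expSeries_div_hasSum_exp (I * z * Real.cos φ)).mul_right
      (cexp (-(I * m * φ)))
    rwa [← Complex.exp_eq_exp_ℂ] at this

theorem integral_exp_I_mul_cos_mul_exp_eq_besselJ (m : ℤ) (z : ℂ) :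
    ∫ φ in (0 : ℝ)..2 * π, cexp (I * z * Real.cos φ) * cexp (-(I * m * φ)) =
      2 * π * I ^ m.natAbs * besselJ m.natAbs z := by
  rw [← (hasSum_mul_integral_cos_pow_mul_exp m z).tsum_eq,
    tsum_mul_integral_cos_pow_mul_exp_eq_besselJ]

lemma integral_comp_add_mul_exp {f : ℝ → ℂ} (hf : Function.Periodic f (2 * π)) (m : ℤ) (t : ℝ) :
    ∫ φ in (0 : ℝ)..2 * π, f (φ + t) * cexp (-(I * m * φ)) =
      cexp (I * m * t) * ∫ φ in (0 : ℝ)..2 * π, f φ * cexp (-(I * m * φ)) := by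
  have hg : Function.Periodic (fun φ : ℝ => f φ * cexp (-(I * m * φ))) (2 * π) := by
    intro φ
    have hperiod : cexp (-(I * m * (2 * π))) = 1 := by
      rw [← exp_int_mul_two_pi_mul_I (-m)]; push_cast; ring_nf
    simp only [hf φ, ofReal_add, ofReal_mul, ofReal_ofNat, mul_add, neg_add, Complex.exp_add,
      hperiod, mul_one]
  have hshift (φ : ℝ) : f (φ + t) * cexp (-(I * m * φ)) =
      cexp (I * m * t) * (f (φ + t) * cexp (-(I * m * ↑(φ + t)))) := by
    rw [mul_left_comm, mul_assoc, ← Complex.exp_add]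
    push_cast; ring_nf
  simp only [hshift, intervalIntegral.integral_const_mul,
    intervalIntegral.integral_comp_add_right (fun φ => f φ * cexp (-(I * m * φ))), zero_add,
    add_comm (2 * π) t, hg.intervalIntegral_add_eq t 0]

lemma exp_mul_cos_mul_cos_mul_abs_sin (x α φ : ℝ) :
    cexp (I * x * Real.cos α * Real.cos φ) * (Real.cos (x * |Real.sin α| * Real.sin φ) : ℂ) =
      (cexp (I * x * Real.cos (φ - α)) + cexp (I * x * Real.cos (φ + α))) / 2 := by
  have habs :
      Real.cos (x * |Real.sin α| * Real.sin φ) = Real.cos (x * Real.sin α * Real.sin φ) := by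
    rcases abs_choice (Real.sin α) with h | h <;> rw [h]
    rw [mul_neg, neg_mul, Real.cos_neg]
  rw [habs, Real.cos_sub, Real.cos_add, ofReal_cos (x * _ * _), Complex.cos, mul_div_assoc',
    mul_add, ← Complex.exp_add, ← Complex.exp_add]
  push_cast
  ring_nf

theorem integral_cos_part_general (m : ℤ) (r k α : ℝ) :
    (∫ φ in (0 : ℝ)..(2 * π),
        Complex.exp (Complex.I * k * r * Real.cos α * Real.cos φ - Complex.I * m * φ) *
          (Real.cos (k * |Real.sin α| * r * Real.sin φ) : ℂ)) =
      2 * (π : ℂ) * Complex.I ^ m.natAbs * besselJ m.natAbs ((k : ℂ) * r) *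
        (Real.cos (m * α) : ℂ) := by
  set f : ℝ → ℂ := fun φ => cexp (I * (k * r : ℝ) * Real.cos φ)
  have hf : Function.Periodic f (2 * π) := fun φ => by simp only [f, Real.cos_add_two_pi]
  have hpt (φ : ℝ) :
      cexp (I * k * r * Real.cos α * Real.cos φ - I * m * φ) *
          (Real.cos (k * |Real.sin α| * r * Real.sin φ) : ℂ) =
        (f (φ + -α) * cexp (-(I * m * φ)) + f (φ + α) * cexp (-(I * m * φ))) / 2 := by
    rw [mul_right_comm k, sub_eq_add_neg, Complex.exp_add, mul_right_comm, mul_assoc I (k : ℂ),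
      ← ofReal_mul]
    simp only [f, ← sub_eq_add_neg]
    linear_combination cexp (-(I * m * φ)) * exp_mul_cos_mul_cos_mul_abs_sin (k * r) α φ
  simp only [hpt]
  rw [intervalIntegral.integral_div, intervalIntegral.integral_add
      (Continuous.intervalIntegrable (by fun_prop) _ _)
      (Continuous.intervalIntegrable (by fun_prop) _ _),
    integral_comp_add_mul_exp hf, integral_comp_add_mul_exp hf,
    integral_exp_I_mul_cos_mul_exp_eq_besselJ]
  rw [ofReal_cos, Complex.cos]
  push_cast
  ring_nf

/-- `∫_0^{2π} e^{ikr cosα cosφ - imφ} cos(k|sinα| r sinφ) dφ = 2π i^{|m|} J_{|m|}(kr) cos(mα)`. -/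
theorem integral_cos_part (m : ℤ) (r k α : ℝ) (hr : 0 ≤ r) (hk : 0 < k) :
    (∫ φ in (0 : ℝ)..(2 * π),
        Complex.exp (Complex.I * k * r * Real.cos α * Real.cos φ - Complex.I * m * φ) *
          (Real.cos (k * |Real.sin α| * r * Real.sin φ) : ℂ)) =
      2 * (π : ℂ) * Complex.I ^ m.natAbs * besselJ m.natAbs ((k : ℂ) * r) *
        (Real.cos (m * α) : ℂ) :=
  integral_cos_part_general m r k α
end

section
/- For any complex numbers a, a', c, c' (with c' and c+a avoiding nonpositive integers so all terms are defined) and natural number n, the terminating hypergeometric identity ₃F₂(a, a', -n; c', 1-n-c; 1) = (Γ(c+a+n) Γ(c) / (Γ(c+a) Γ(c+n))) · ₃F₂(a, c'-a', -n; c', c+a; 1) holds, where ₃F₂ with upper parameter -n denotes the finite sum Σ_{k=0}^{n} ((a)_k (b)_k (-n)_k) / ((c₁)_k (c₂)_k k!). -/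
/-!
Expanding `(c' - a')_k / (c')_k = ₂F₁(-k, a'; c'; 1)` by Chu–Vandermonde turns the right-hand
`₃F₂` into a double sum. After exchanging the order of summation, the inner sum is again a
Chu–Vandermonde sum, `₂F₁(-(n - j), a + j; c + a + j; 1) = (c)_{n-j} / (c + a + j)_{n-j}`,
and the reflection `(1 - n - c)_j = (-1)^j (c + n - j)_j` turns what is left into
`(c)_n / (c + a)_n` times the left-hand `₃F₂`. The Gamma quotient is `(c + a)_n / (c)_n`.
-/

open Complex Finset

/-- Pochhammer symbol `(x)_k = x(x+1)⋯(x+k-1)`. -/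
noncomputable def poch (x : ℂ) (k : ℕ) : ℂ := ∏ i ∈ Finset.range k, (x + i)

/-- Terminating `₃F₂(a, b, -n; c, d; 1)` as a finite sum. -/
noncomputable def threeF2 (a b : ℂ) (n : ℕ) (c d : ℂ) : ℂ :=
  ∑ k ∈ Finset.range (n + 1),
    poch a k * poch b k * poch (-(n : ℂ)) k / (poch c k * poch d k * (k.factorial : ℂ))

open Polynomial

theorem poch_eq_ascPochhammer_eval (x : ℂ) (k : ℕ) :
    poch x k = (ascPochhammer ℂ k).eval x := by
  induction k with
  | zero => simp [poch]
  | succ k ih => rw [poch, prod_range_succ, ← poch, ih, ascPochhammer_succ_eval]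

theorem poch_eq_descPochhammer_smeval (x : ℂ) (k : ℕ) :
    poch x k = (descPochhammer ℤ k).smeval (x + k - 1) := by
  rw [descPochhammer_smeval_eq_ascPochhammer, ascPochhammer_smeval_eq_eval,
    poch_eq_ascPochhammer_eval]
  ring_nf

theorem poch_add (x : ℂ) (m k : ℕ) : poch x (m + k) = poch x m * poch (x + m) k := by
  simp only [poch, prod_range_add, Nat.cast_add, add_assoc]

theorem poch_mul_poch_sub {m n : ℕ} (x : ℂ) (hmn : m ≤ n) :
    poch x m * poch (x + m) (n - m) = poch x n := by
  rw [← poch_add, Nat.add_sub_cancel' hmn]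

theorem poch_ne_zero_of_le {x : ℂ} {m n : ℕ} (hmn : m ≤ n) (h : poch x n ≠ 0) :
    poch x m ≠ 0 :=
  left_ne_zero_of_mul (poch_mul_poch_sub x hmn ▸ h)

theorem poch_add_ne_zero {x : ℂ} {m n : ℕ} (hmn : m ≤ n) (h : poch x n ≠ 0) :
    poch (x + m) (n - m) ≠ 0 :=
  right_ne_zero_of_mul (poch_mul_poch_sub x hmn ▸ h)

theorem poch_one_sub_sub (x : ℂ) (k : ℕ) : poch (1 - x - k) k = (-1) ^ k * poch x k := by
  rw [poch_eq_ascPochhammer_eval, show 1 - x - k = -(x + k - 1) by ring,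
    ascPochhammer_eval_neg_eq_descPochhammer, descPochhammer_eval_eq_ascPochhammer,
    poch_eq_ascPochhammer_eval]
  ring_nf

theorem poch_neg_natCast (n k : ℕ) : poch (-n) k = (-1) ^ k * n.descFactorial k := by
  rw [poch_eq_ascPochhammer_eval, ascPochhammer_eval_neg_eq_descPochhammer,
    descPochhammer_eval_eq_descFactorial]

theorem poch_neg_natCast_div_factorial (j m : ℕ) :
    poch (-((j + m : ℕ) : ℂ)) j / (j + m).factorial = (-1) ^ j / m.factorial := by
  have h := Nat.factorial_mul_descFactorial (Nat.le_add_right j m)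
  rw [Nat.add_sub_cancel_left] at h
  have hfac : (m.factorial : ℂ) ≠ 0 := Nat.cast_ne_zero.mpr m.factorial_ne_zero
  rw [poch_neg_natCast, ← h]
  push_cast
  field_simp

theorem Gamma_add_natCast_eq_poch_mul (x : ℂ) (n : ℕ) (h : poch x n ≠ 0) :
    Gamma (x + n) = poch x n * Gamma x := by
  induction n with
  | zero => simp [poch]
  | succ n ih =>
    have hsucc : poch x (n + 1) = poch x n * (x + n) := prod_range_succ _ _
    rw [hsucc] at h ⊢
    rw [Nat.cast_succ, ← add_assoc, Gamma_add_one _ (right_ne_zero_of_mul h),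
      ih (left_ne_zero_of_mul h)]
    ring

/-- Chu–Vandermonde, read off from the binomial theorem for falling factorials. -/
theorem poch_sub_eq_sum (b d : ℂ) (n : ℕ) :
    poch (d - b) n =
      ∑ m ∈ range (n + 1), n.choose m * ((-1) ^ m * poch b m) * poch (d + m) (n - m) := by
  rw [poch_eq_descPochhammer_smeval, show d - b + n - 1 = -b + (d + n - 1) by ring,
    Ring.descPochhammer_smeval_add _ (Commute.all _ _), Nat.sum_antidiagonal_eq_sum_range_succ_mk]
  refine sum_congr rfl fun m hm => ?_
  have hm : m ≤ n := Nat.lt_succ_iff.mp (mem_range.mp hm)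
  rw [← poch_one_sub_sub, poch_eq_descPochhammer_smeval, poch_eq_descPochhammer_smeval,
    Nat.cast_sub hm]
  ring_nf

/-- The terminating `₂F₁(b, -n; d; 1)`. -/
noncomputable def twoF1 (b : ℂ) (n : ℕ) (d : ℂ) : ℂ :=
  ∑ k ∈ range (n + 1), poch b k * poch (-(n : ℂ)) k / (poch d k * (k.factorial : ℂ))

theorem twoF1_eq_poch_div (b d : ℂ) (n : ℕ) (hd : poch d n ≠ 0) :
    twoF1 b n d = poch (d - b) n / poch d n := by
  rw [eq_div_iff hd, twoF1, sum_mul, poch_sub_eq_sum]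
  refine sum_congr rfl fun m hm => ?_
  have hm : m ≤ n := Nat.lt_succ_iff.mp (mem_range.mp hm)
  have hdm : poch d m ≠ 0 := poch_ne_zero_of_le hm hd
  have hfac : (m.factorial : ℂ) ≠ 0 := Nat.cast_ne_zero.mpr m.factorial_ne_zero
  rw [← poch_mul_poch_sub d hm, poch_neg_natCast, Nat.descFactorial_eq_factorial_mul_choose]
  push_cast
  field_simp

theorem sum_poch_mul_poch_neg_natCast (a c : ℂ) {n j : ℕ} (hj : j ≤ n)
    (hca : poch (c + a) n ≠ 0) :
    ∑ m ∈ range (n - j + 1), poch a (j + m) * poch (-(n : ℂ)) (j + m) /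
        (poch (c + a) (j + m) * (j + m).factorial) * poch (-((j + m : ℕ) : ℂ)) j =
      (-1) ^ j * poch a j * poch (-(n : ℂ)) j * poch c (n - j) / poch (c + a) n := by
  have chu := twoF1_eq_poch_div (a + j) (c + a + j) (n - j) (poch_add_ne_zero hj hca)
  rw [show c + a + j - (a + j) = c by ring] at chu
  calc _ = (-1) ^ j * poch a j * poch (-(n : ℂ)) j / poch (c + a) j *
        twoF1 (a + j) (n - j) (c + a + j) := by
        rw [twoF1, mul_sum]
        refine sum_congr rfl fun m _ => ?_
        rw [poch_add a, poch_add (-(n : ℂ)), poch_add (c + a), Nat.cast_sub hj, neg_sub,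
          sub_eq_neg_add]
        linear_combination poch a j * poch (a + j) m * poch (-(n : ℂ)) j * poch (-n + j) m /
          (poch (c + a) j * poch (c + a + j) m) * poch_neg_natCast_div_factorial j m
    _ = _ := by rw [chu, ← poch_mul_poch_sub (c + a) hj]; ring

theorem threeF2_eq_poch_div_mul_threeF2 (a a' c c' : ℂ) (n : ℕ) (hc' : poch c' n ≠ 0)
    (hc : poch (1 - n - c) n ≠ 0) (hca : poch (c + a) n ≠ 0) :
    threeF2 a (c' - a') n c' (c + a) =
      poch c n / poch (c + a) n * threeF2 a a' n c' (1 - n - c) := by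
  set u : ℕ → ℂ := fun k => poch a k * poch (-(n : ℂ)) k / (poch (c + a) k * k.factorial)
  set v : ℕ → ℂ := fun j => poch a' j / (poch c' j * j.factorial)
  calc threeF2 a (c' - a') n c' (c + a)
      = ∑ k ∈ range (n + 1), u k * twoF1 a' k c' := by
        refine sum_congr rfl fun k hk => ?_
        rw [twoF1_eq_poch_div a' c' k
          (poch_ne_zero_of_le (Nat.lt_succ_iff.mp (mem_range.mp hk)) hc')]
        ring
    _ = ∑ k ∈ range (n + 1), ∑ j ∈ range (k + 1),
          v j * (u (j + (k - j)) * poch (-((j + (k - j) : ℕ) : ℂ)) j) := by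
        refine sum_congr rfl fun k _ => ?_
        rw [twoF1, mul_sum]
        refine sum_congr rfl fun j hj => ?_
        rw [Nat.add_sub_cancel' (Nat.lt_succ_iff.mp (mem_range.mp hj))]
        ring
    _ = ∑ j ∈ range (n + 1), ∑ m ∈ range (n - j + 1),
          v j * (u (j + m) * poch (-((j + m : ℕ) : ℂ)) j) := by
        refine (sum_range_diag_flip (n + 1)
          fun j m => v j * (u (j + m) * poch (-((j + m : ℕ) : ℂ)) j)).trans ?_
        refine sum_congr rfl fun j hj => ?_
        rw [Nat.sub_add_comm (Nat.lt_succ_iff.mp (mem_range.mp hj))]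
    _ = ∑ j ∈ range (n + 1),
          v j * ((-1) ^ j * poch a j * poch (-(n : ℂ)) j * poch c (n - j) / poch (c + a) n) := by
        refine sum_congr rfl fun j hj => ?_
        rw [← mul_sum,
          sum_poch_mul_poch_neg_natCast a c (Nat.lt_succ_iff.mp (mem_range.mp hj)) hca]
    _ = poch c n / poch (c + a) n * threeF2 a a' n c' (1 - n - c) := by
        rw [threeF2, mul_sum]
        refine sum_congr rfl fun j hj => ?_
        have hj : j ≤ n := Nat.lt_succ_iff.mp (mem_range.mp hj)
        have hrefl : poch (c + (n - j : ℕ)) j = (-1) ^ j * poch (1 - n - c) j := by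
          rw [← poch_one_sub_sub, Nat.cast_sub hj]
          ring_nf
        have hj' : poch (1 - n - c) j ≠ 0 := poch_ne_zero_of_le hj hc
        rw [← poch_mul_poch_sub c (Nat.sub_le n j), Nat.sub_sub_self hj, hrefl]
        simp only [v]
        field_simp

/-- Thomae-type transformation of a terminating `₃F₂(1)`:
`₃F₂(a, a', -n; c', 1-n-c; 1)
  = (Γ(c+a+n)Γ(c)/(Γ(c+a)Γ(c+n))) ₃F₂(a, c'-a', -n; c', c+a; 1)`. -/
theorem threeF2_transformation (a a' c c' : ℂ) (n : ℕ)
    (hc' : ∀ k ≤ n, poch c' k ≠ 0)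
    (hc : ∀ k ≤ n, poch (1 - (n : ℂ) - c) k ≠ 0)
    (hca : ∀ k ≤ n, poch (c + a) k ≠ 0)
    (hG1 : Complex.Gamma (c + a) ≠ 0) (hG2 : Complex.Gamma (c + n) ≠ 0) :
    threeF2 a a' n c' (1 - (n : ℂ) - c) =
      Complex.Gamma (c + a + n) * Complex.Gamma c /
          (Complex.Gamma (c + a) * Complex.Gamma (c + n)) *
        threeF2 a (c' - a') n c' (c + a) := by
  have hcn : poch c n ≠ 0 := by
    have h := hc n le_rfl
    rwa [show 1 - (n : ℂ) - c = 1 - c - n by ring, poch_one_sub_sub, mul_ne_zero_iff,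
      and_iff_right (pow_ne_zero _ (neg_ne_zero.mpr one_ne_zero))] at h
  have hcan := hca n le_rfl
  rw [Gamma_add_natCast_eq_poch_mul _ _ hcn] at hG2 ⊢
  rw [Gamma_add_natCast_eq_poch_mul _ _ hcan,
    threeF2_eq_poch_div_mul_threeF2 a a' c c' n (hc' n le_rfl) (hc n le_rfl) hcan]
  field_simp [right_ne_zero_of_mul hG2]
end

section
/- For each ρ ∈ ℂ, the function ω₂(z) = z · e^{-i z²/4} · ₁F₁(3/4 - iρ/2; 3/2; i z²/2) satisfies the differential equation ω₂''(z) + (z²/4 - ρ) ω₂(z) = 0 for all z ∈ ℂ. -/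
open Complex

/-- Confluent hypergeometric function `₁F₁(a; b; x)`. -/
noncomputable def oneF1 (a b x : ℂ) : ℂ :=
  ∑' n : ℕ, poch a n * x ^ n / (poch b n * (n.factorial : ℂ))

/-!
Put `a = 3/4 - iρ/2` and `F = ₁F₁(a; 3/2; ·)`. Its Taylor coefficients `cₙ` satisfy
`(n + 1)(3/2 + n) cₙ₊₁ = (a + n) cₙ` and decay faster than any geometric sequence, so termwise
differentiation of the entire series `F` gives Kummer's equation
`x F'' + (3/2 - x) F' - a F = 0`. Differentiating `ω₂(z) = z e^{-iz²/4} F(iz²/2)` twice,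
`ω₂'' + (z²/4 - ρ) ω₂` is `2iz e^{-iz²/4}` times Kummer's expression at `x = iz²/2`.
-/

open Filter Topology

def coeffDeriv (c : ℕ → ℂ) (n : ℕ) : ℂ := (n + 1) * c (n + 1)

def IsEntireCoeff (c : ℕ → ℂ) : Prop := ∀ r : ℝ, 0 ≤ r → Summable fun n => ‖c n‖ * r ^ n

namespace IsEntireCoeff

variable {c : ℕ → ℂ}

theorem summable (hc : IsEntireCoeff c) (x : ℂ) : Summable fun n => c n * x ^ n :=
  .of_norm <| by simpa only [norm_mul, norm_pow] using hc ‖x‖ (norm_nonneg x)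

theorem of_succ_eq_mul {q : ℕ → ℂ} (hq : Tendsto q atTop (𝓝 0))
    (h : ∀ n, c (n + 1) = c n * q n) : IsEntireCoeff c := by
  intro r hr
  have hsmall : ∀ᶠ n in atTop, ‖q n‖ * r ≤ 1 / 2 := by
    have : Tendsto (fun n => ‖q n‖ * r) atTop (𝓝 0) := by
      simpa using hq.norm.mul_const r
    exact this.eventually (ge_mem_nhds (by norm_num))
  refine summable_of_ratio_norm_eventually_le (r := 1 / 2) (by norm_num) ?_
  filter_upwards [hsmall] with n hn
  rw [Real.norm_of_nonneg (by positivity), Real.norm_of_nonneg (by positivity), h, norm_mul,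
    pow_succ]
  calc ‖c n‖ * ‖q n‖ * (r ^ n * r) = ‖c n‖ * r ^ n * (‖q n‖ * r) := by ring
    _ ≤ ‖c n‖ * r ^ n * (1 / 2) := by gcongr
    _ = 1 / 2 * (‖c n‖ * r ^ n) := by ring

theorem coeffDeriv (hc : IsEntireCoeff c) : IsEntireCoeff (coeffDeriv c) := by
  intro r hr
  refine .of_nonneg_of_le (fun n => by positivity) (fun n => ?_)
    ((summable_nat_add_iff 1).2 (hc (2 * (r + 1)) (by positivity)))
  have hn : (n + 1 : ℝ) ≤ 2 ^ (n + 1) := by exact_mod_cast (Nat.lt_two_pow_self).le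
  have hr : r ^ n ≤ (r + 1) ^ (n + 1) :=
    (pow_le_pow_left₀ hr (by linarith) n).trans (pow_le_pow_right₀ (by linarith) n.le_succ)
  calc ‖_root_.coeffDeriv c n‖ * r ^ n = ‖c (n + 1)‖ * ((n + 1) * r ^ n) := by
        rw [_root_.coeffDeriv, norm_mul, ← Nat.cast_add_one, Complex.norm_natCast]; push_cast; ring
    _ ≤ ‖c (n + 1)‖ * (2 ^ (n + 1) * (r + 1) ^ (n + 1)) := by gcongr
    _ = ‖c (n + 1)‖ * (2 * (r + 1)) ^ (n + 1) := by rw [mul_pow]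

theorem hasDerivAt_tsum (hc : IsEntireCoeff c) (x : ℂ) :
    HasDerivAt (fun y => ∑' n, c n * y ^ n) (∑' n, _root_.coeffDeriv c n * x ^ n) x := by
  have hsplit : (fun y => ∑' n, c n * y ^ n) = fun y => c 0 + ∑' n, c (n + 1) * y ^ (n + 1) := by
    funext y
    rw [(hc.summable y).tsum_eq_zero_add, pow_zero, mul_one]
  set R := ‖x‖ + 1
  have hbound : ∀ n, ∀ y ∈ Metric.ball (0 : ℂ) R,
      ‖_root_.coeffDeriv c n * y ^ n‖ ≤ ‖_root_.coeffDeriv c n‖ * R ^ n := by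
    intro n y hy
    rw [norm_mul, norm_pow]
    gcongr
    exact (mem_ball_zero_iff.mp hy).le
  rw [hsplit]
  refine .const_add _ <| hasDerivAt_tsum_of_isPreconnected (hc.coeffDeriv R (by positivity))
    Metric.isOpen_ball (convex_ball 0 R).isPreconnected (fun n y _ => ?_) hbound
    (Metric.mem_ball_self (by positivity)) (by simp) (by simp [R])
  refine ((hasDerivAt_pow (n + 1) y).const_mul (c (n + 1))).congr_deriv ?_
  simp only [_root_.coeffDeriv, Nat.cast_add_one, Nat.add_sub_cancel]
  ring

end IsEntireCoeff

theorem hasSum_natCast_mul_mul_pow {c : ℕ → ℂ} {x : ℂ}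
    (h : Summable fun n => coeffDeriv c n * x ^ n) :
    HasSum (fun n => n * c n * x ^ n) (x * ∑' n, coeffDeriv c n * x ^ n) := by
  refine (hasSum_nat_add_iff' 1).1 ?_
  simp only [Finset.sum_range_one, CharP.cast_eq_zero, zero_mul, sub_zero]
  refine (h.hasSum.mul_left x).congr_fun fun n => ?_
  simp only [coeffDeriv, Nat.cast_add_one, pow_succ]
  ring

noncomputable def hyp1F1Coeff (a b : ℂ) (n : ℕ) : ℂ := poch a n / (poch b n * n.factorial)

theorem oneF1_eq_tsum (a b x : ℂ) : oneF1 a b x = ∑' n, hyp1F1Coeff a b n * x ^ n :=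
  tsum_congr fun _ => mul_div_right_comm _ _ _

/-- No hypothesis on `b` is needed: when `b + n = 0` both sides are `0` because `x / 0 = 0`. -/
theorem hyp1F1Coeff_succ (a b : ℂ) (n : ℕ) :
    hyp1F1Coeff a b (n + 1) = hyp1F1Coeff a b n * ((a + n) / ((b + n) * (n + 1))) := by
  simp only [hyp1F1Coeff, poch, Finset.prod_range_succ, Nat.factorial_succ, Nat.cast_mul,
    Nat.cast_add_one]
  rw [← mul_div_mul_comm]
  ring_nf

theorem isEntireCoeff_hyp1F1Coeff (a b : ℂ) : IsEntireCoeff (hyp1F1Coeff a b) := by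
  refine .of_succ_eq_mul ?_ (hyp1F1Coeff_succ a b)
  have hratio := tendsto_add_mul_div_add_mul_atTop_nhds a b 1 one_ne_zero
  have hq := hratio.mul (tendsto_one_div_add_atTop_nhds_zero_nat (𝕜 := ℂ))
  simp only [one_mul, div_one, mul_zero] at hq
  exact hq.congr fun n => by rw [div_mul_div_comm, mul_one]

theorem add_mul_coeffDeriv_hyp1F1Coeff {a b : ℂ} {n : ℕ} (hb : b + n ≠ 0) :
    (b + n) * coeffDeriv (hyp1F1Coeff a b) n = (a + n) * hyp1F1Coeff a b n := by
  rw [coeffDeriv, hyp1F1Coeff_succ]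
  field_simp [Nat.cast_add_one_ne_zero n]

theorem hyp1F1_kummer {a b : ℂ} (hb : ∀ n : ℕ, b + n ≠ 0) (x : ℂ) :
    x * ∑' n, coeffDeriv (coeffDeriv (hyp1F1Coeff a b)) n * x ^ n +
      (b - x) * ∑' n, coeffDeriv (hyp1F1Coeff a b) n * x ^ n -
      a * ∑' n, hyp1F1Coeff a b n * x ^ n = 0 := by
  have hc := isEntireCoeff_hyp1F1Coeff a b
  have hsum := ((hasSum_natCast_mul_mul_pow (hc.coeffDeriv.coeffDeriv.summable x)).add
    ((hc.coeffDeriv.summable x).hasSum.mul_left b)).sub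
    ((hasSum_natCast_mul_mul_pow (hc.coeffDeriv.summable x)).add
    ((hc.summable x).hasSum.mul_left a))
  have hzero := hsum.congr_fun (g := fun _ => 0) fun n => by
    linear_combination (-x ^ n) * add_mul_coeffDeriv_hyp1F1Coeff (a := a) (hb n)
  linear_combination hzero.unique hasSum_zero

theorem weber_of_kummer {f f' f'' : ℂ → ℂ} (ρ : ℂ) (hf : ∀ x, HasDerivAt f (f' x) x)
    (hf' : ∀ x, HasDerivAt f' (f'' x) x)
    (hkummer : ∀ x, x * f'' x + (3 / 2 - x) * f' x - (3 / 4 - I * ρ / 2) * f x = 0) (z : ℂ) :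
    deriv (deriv fun w => w * exp (-I * w ^ 2 / 4) * f (I * w ^ 2 / 2)) z +
      (z ^ 2 / 4 - ρ) * (z * exp (-I * z ^ 2 / 4) * f (I * z ^ 2 / 2)) = 0 := by
  have hsq : ∀ (k : ℂ) w, HasDerivAt (fun w => k * w ^ 2) (2 * k * w) w := fun k w =>
    ((hasDerivAt_pow 2 w).const_mul k).congr_deriv (by push_cast; ring)
  have hφ : ∀ w, HasDerivAt (fun w => I * w ^ 2 / 2) (I * w) w := fun w =>
    ((hsq I w).div_const 2).congr_deriv (by ring)
  have hE : ∀ w, HasDerivAt (fun w => exp (-I * w ^ 2 / 4))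
      (exp (-I * w ^ 2 / 4) * (-I * w / 2)) w := fun w =>
    (((hsq (-I) w).div_const 4).congr_deriv (by ring)).cexp
  have hfφ : ∀ w, HasDerivAt (fun w => f (I * w ^ 2 / 2)) (f' (I * w ^ 2 / 2) * (I * w)) w :=
    fun w => (hf _).comp w (hφ w)
  have hf'φ : ∀ w, HasDerivAt (fun w => f' (I * w ^ 2 / 2)) (f'' (I * w ^ 2 / 2) * (I * w)) w :=
    fun w => (hf' _).comp w (hφ w)
  have hω' : deriv (fun w => w * exp (-I * w ^ 2 / 4) * f (I * w ^ 2 / 2)) = fun w =>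
      exp (-I * w ^ 2 / 4) *
        ((1 - I * w ^ 2 / 2) * f (I * w ^ 2 / 2) + I * w ^ 2 * f' (I * w ^ 2 / 2)) := by
    funext w
    refine ((((hasDerivAt_id' w).fun_mul (hE w)).fun_mul (hfφ w)).congr_deriv ?_).deriv
    ring
  rw [hω', ((hE z).fun_mul ((((hφ z).const_sub 1).fun_mul (hfφ z)).fun_add
    ((hsq I z).fun_mul (hf'φ z)))).deriv]
  linear_combination (2 * I * z * exp (-I * z ^ 2 / 4)) * hkummer (I * z ^ 2 / 2) +
    (exp (-I * z ^ 2 / 4) * f (I * z ^ 2 / 2) * (z ^ 3 / 4 - ρ * z)) * I_sq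

/-- `ω₂(z) = z e^{-iz²/4} ₁F₁(3/4 - iρ/2; 3/2; iz²/2)` solves `ω'' + (z²/4 - ρ)ω = 0`. -/
theorem omega2_solves (ρ : ℂ) :
    ∀ z : ℂ,
      deriv (deriv fun w : ℂ =>
          w * Complex.exp (-Complex.I * w ^ 2 / 4) *
            oneF1 (3 / 4 - Complex.I * ρ / 2) (3 / 2) (Complex.I * w ^ 2 / 2)) z +
        (z ^ 2 / 4 - ρ) *
          (z * Complex.exp (-Complex.I * z ^ 2 / 4) *
            oneF1 (3 / 4 - Complex.I * ρ / 2) (3 / 2) (Complex.I * z ^ 2 / 2)) = 0 := by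
  have hc := isEntireCoeff_hyp1F1Coeff (3 / 4 - I * ρ / 2) (3 / 2)
  have hb (n : ℕ) : (3 / 2 : ℂ) + n ≠ 0 := fun h => by
    have hre := congrArg re h
    norm_num at hre
    linarith
  rw [funext (oneF1_eq_tsum _ _)]
  exact weber_of_kummer ρ hc.hasDerivAt_tsum hc.coeffDeriv.hasDerivAt_tsum (hyp1F1_kummer hb)
end
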